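/- arXiv:1210.4107 — 4 statements merged into one kernel-verified Lean document; each statement's English description precedes it below -/
import Mathlib

section
/- Let X and Y be Banach spaces, Γ : X ⇒ Y a multifunction and (x̄,ȳ) ∈ Gr Γ. If Γ has the Aubin property around (x̄,ȳ), then for every α > lip Γ(x̄,ȳ) there exists r > 0 such that for every (x,y) ∈ Gr Γ ∩ (B(x̄,r) × B(ȳ,r)), every y* ∈ Y* and every x* ∈ D̂*Γ(x,y)(y*), one has ‖x*‖ ≤ α‖y*‖. -/
open Filter Set Metric
open scoped ENNReal Topology

/-- The excess `e(A,B) = sup_{a ∈ A} d(a,B)` (valued in `ℝ≥0∞`). -/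
noncomputable def excess {Y : Type*} [PseudoEMetricSpace Y] (A B : Set Y) : ℝ≥0∞ :=
  ⨆ a ∈ A, EMetric.infEdist a B

/-- `F` has the Aubin property around `(x₀, y₀)` with constant `L > 0`. -/
def AubinAround {X Y : Type*} [MetricSpace X] [MetricSpace Y]
    (F : X → Set Y) (x₀ : X) (y₀ : Y) (L : ℝ) : Prop :=
  ∃ U ∈ 𝓝 x₀, ∃ V ∈ 𝓝 y₀, ∀ x ∈ U, ∀ u ∈ U,
    excess (F x ∩ V) (F u) ≤ ENNReal.ofReal (L * dist x u)

/-- The exact Lipschitz bound `lip F(x₀,y₀)`. -/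
noncomputable def lipMod {X Y : Type*} [MetricSpace X] [MetricSpace Y]
    (F : X → Set Y) (x₀ : X) (y₀ : Y) : ℝ≥0∞ :=
  sInf {l : ℝ≥0∞ | ∃ L : ℝ, 0 < L ∧ AubinAround F x₀ y₀ L ∧ l = ENNReal.ofReal L}

/-- `xstar ∈ D̂*Γ(x,y)(ystar)`, i.e. `(xstar, −ystar)` belongs to the Fréchet normal cone
to the graph of `Γ` at `(x,y)`, where `X × Y` carries the norm `‖(x,y)‖ = ‖x‖ + ‖y‖`. -/
def InFrechetCoderiv {X Y : Type*} [NormedAddCommGroup X] [NormedSpace ℝ X]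
    [NormedAddCommGroup Y] [NormedSpace ℝ Y]
    (Γ : X → Set Y) (x : X) (y : Y) (ystar : Y →L[ℝ] ℝ) (xstar : X →L[ℝ] ℝ) : Prop :=
  ∀ ε > (0 : ℝ), ∃ δ > (0 : ℝ), ∀ u : X, ∀ w ∈ Γ u, (u, w) ≠ (x, y) →
    ‖u - x‖ + ‖w - y‖ < δ →
      xstar (u - x) - ystar (w - y) ≤ ε * (‖u - x‖ + ‖w - y‖)

/-- If `Γ` has the Aubin property around `(xb, yb)`, then for every
`α > lip Γ(xb, yb)` there is `r > 0` such that every Fréchet coderivative element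
`xstar ∈ D̂*Γ(x,y)(ystar)` at points of the graph `r`-close to `(xb, yb)` satisfies
`‖xstar‖ ≤ α‖ystar‖`. -/
theorem aubin_implies_coderivative_upper_estimate
    {X Y : Type*} [NormedAddCommGroup X] [NormedSpace ℝ X]
    [NormedAddCommGroup Y] [NormedSpace ℝ Y]
    (Γ : X → Set Y) (xb : X) (yb : Y) (hgr : yb ∈ Γ xb)
    (haub : ∃ L > (0 : ℝ), AubinAround Γ xb yb L)
    (α : ℝ) (hα : lipMod Γ xb yb < ENNReal.ofReal α) :
    ∃ r > (0 : ℝ), ∀ x y, y ∈ Γ x → dist x xb < r → dist y yb < r →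
      ∀ (ystar : Y →L[ℝ] ℝ) (xstar : X →L[ℝ] ℝ),
        InFrechetCoderiv Γ x y ystar xstar → ‖xstar‖ ≤ α * ‖ystar‖ := by
  -- extract a Lipschitz constant L < α
  have hα0 : 0 < α := by
    by_contra h
    push_neg at h
    rw [ENNReal.ofReal_eq_zero.mpr h] at hα
    exact (not_lt_of_ge zero_le) hα
  obtain ⟨l, hlmem, hlα⟩ := sInf_lt_iff.mp hα
  obtain ⟨L, hL0, hLaub, rfl⟩ := hlmem
  have hLα : L < α := by
    by_contra h
    push_neg at h
    exact absurd hlα (not_lt_of_ge (ENNReal.ofReal_le_ofReal h))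
  obtain ⟨U, hU, V, hV, hAub⟩ := hLaub
  obtain ⟨ρ1, hρ1, hball1⟩ := Metric.mem_nhds_iff.mp hU
  obtain ⟨ρ2, hρ2, hball2⟩ := Metric.mem_nhds_iff.mp hV
  refine ⟨min (ρ1 / 2) ρ2, lt_min (by linarith) hρ2, ?_⟩
  intro x y hy hx hyy ystar xstar hcod
  set r := min (ρ1 / 2) ρ2 with hr
  have hr0 : 0 < r := lt_min (by linarith) hρ2
  have hxU : x ∈ U := hball1 (by
    simp only [Metric.mem_ball]
    calc dist x xb < r := hx
    _ ≤ ρ1 / 2 := min_le_left _ _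
    _ < ρ1 := by linarith)
  have hyV : y ∈ V := hball2 (by
    simp only [Metric.mem_ball]
    exact lt_of_lt_of_le hyy (min_le_right _ _))
  -- key pointwise bound
  have key : ∀ h : X, xstar h ≤ (α * ‖ystar‖) * ‖h‖ := by
    intro h
    rcases eq_or_ne h 0 with rfl | hh0
    · simp
    have hh : 0 < ‖h‖ := norm_pos_iff.mpr hh0
    refine le_of_forall_pos_le_add ?_
    intro ε hε
    set ε₁ : ℝ := ε / ((1 + α) * ‖h‖) with hε₁def
    have hε₁ : 0 < ε₁ := div_pos hε (by positivity)
    obtain ⟨δ, hδ, hfr⟩ := hcod ε₁ hε₁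
    set t : ℝ := min (r / ‖h‖) (δ / (2 * (1 + α) * ‖h‖)) with ht
    have ht0 : 0 < t := lt_min (div_pos hr0 hh) (div_pos hδ (by positivity))
    have hts : t * ‖h‖ ≤ r := by
      rw [← le_div_iff₀ hh]
      exact min_le_left _ _
    have htδ : t * ‖h‖ * (1 + α) < δ := by
      have : t ≤ δ / (2 * (1 + α) * ‖h‖) := min_le_right _ _
      have h2 : t * ‖h‖ * (1 + α) ≤ δ / 2 := by
        have h3 := (le_div_iff₀ (by positivity : (0:ℝ) < 2 * (1 + α) * ‖h‖)).mp this
        nlinarith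
      linarith
    set u : X := x + t • h with hu
    have hux : u - x = t • h := by simp [hu]
    have hnux : ‖u - x‖ = t * ‖h‖ := by
      rw [hux, norm_smul, Real.norm_eq_abs, abs_of_pos ht0]
    have hdxu : dist x u = t * ‖h‖ := by
      rw [dist_eq_norm, ← norm_neg, neg_sub, hnux]
    have huU : u ∈ U := hball1 (by
      simp only [Metric.mem_ball]
      calc dist u xb ≤ dist u x + dist x xb := dist_triangle _ _ _
      _ < t * ‖h‖ + r := by
          have : dist u x = t * ‖h‖ := by rw [dist_eq_norm, hnux]
          linarith
      _ ≤ r + r := by linarith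
      _ ≤ ρ1 / 2 + ρ1 / 2 := by
          have := min_le_left (ρ1 / 2) ρ2
          rw [← hr] at this; linarith
      _ = ρ1 := by ring)
    -- Aubin gives a nearby point of Γ u
    have hexc := hAub x hxU u huU
    have hinf : EMetric.infEdist y (Γ u) ≤ ENNReal.ofReal (L * dist x u) := by
      refine le_trans ?_ hexc
      exact le_iSup₂_of_le y ⟨hy, hyV⟩ le_rfl
    have hlt : EMetric.infEdist y (Γ u) < ENNReal.ofReal (α * (t * ‖h‖)) := by
      refine lt_of_le_of_lt hinf ?_
      rw [hdxu]
      exact ENNReal.ofReal_lt_ofReal_iff (by positivity) |>.mpr (mul_lt_mul_of_pos_right hLα (mul_pos ht0 hh))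
    obtain ⟨w, hwΓ, hwd⟩ := EMetric.infEdist_lt_iff.mp hlt
    have hwy : ‖w - y‖ < α * (t * ‖h‖) := by
      have := edist_lt_ofReal.mp hwd
      rw [dist_comm] at this
      rwa [← dist_eq_norm]
    have hwy0 : 0 ≤ ‖w - y‖ := norm_nonneg _
    -- apply the Fréchet normal inequality
    have hne : (u, w) ≠ (x, y) := by
      intro hcontra
      have : u = x := congrArg Prod.fst hcontra
      have : t • h = 0 := by
        have := sub_eq_zero.mpr this
        rwa [hux] at this
      rcases smul_eq_zero.mp this with h1 | h1
      · exact absurd h1 (ne_of_gt ht0)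
      · exact hh0 h1
    have hsmall : ‖u - x‖ + ‖w - y‖ < δ := by
      rw [hnux]
      nlinarith
    have hmain := hfr u w hwΓ hne hsmall
    rw [hux] at hmain
    have hxs : xstar (t • h) = t * xstar h := by
      rw [map_smul]; rfl
    have hys : ystar (w - y) ≤ ‖ystar‖ * ‖w - y‖ := by
      calc ystar (w - y) ≤ ‖ystar (w - y)‖ := le_abs_self _
      _ ≤ ‖ystar‖ * ‖w - y‖ := ystar.le_opNorm _
    have hyn : 0 ≤ ‖ystar‖ := norm_nonneg _
    -- combine
    have hnux' : ‖t • h‖ = t * ‖h‖ := by rw [← hux, hnux]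
    rw [hxs, hnux'] at hmain
    have hεeq : ε₁ * ((1 + α) * ‖h‖) = ε := by
      rw [hε₁def, div_mul_cancel₀]
      positivity
    -- t * xstar h ≤ ‖ystar‖ * ‖w-y‖ + ε₁ * (t‖h‖ + ‖w-y‖)
    have step : t * xstar h ≤ t * ((α * ‖ystar‖) * ‖h‖ + ε) := by
      have h1 : ‖ystar‖ * ‖w - y‖ ≤ ‖ystar‖ * (α * (t * ‖h‖)) :=
        mul_le_mul_of_nonneg_left (le_of_lt hwy) hyn
      have h2 : ε₁ * (t * ‖h‖ + ‖w - y‖) ≤ ε₁ * (t * ‖h‖ + α * (t * ‖h‖)) :=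
        mul_le_mul_of_nonneg_left (by linarith) (le_of_lt hε₁)
      have h3 : ε₁ * (t * ‖h‖ + α * (t * ‖h‖)) = t * ε := by
        rw [← hεeq]; ring
      nlinarith
    exact le_of_mul_le_mul_left (by linarith [step]) ht0
  -- conclude operator norm bound
  refine xstar.opNorm_le_bound (by positivity) ?_
  intro h
  rw [Real.norm_eq_abs, abs_le]
  constructor
  · have := key (-h)
    simp only [map_neg, norm_neg] at this
    linarith
  · exact key h
end

section
/- Let X and Y be Banach spaces, Γ : X ⇒ Y a multifunction and (x̄,ȳ) ∈ Gr Γ. If Γ is open at linear rate around (x̄,ȳ), then for every α ∈ (0, lop Γ(x̄,ȳ)) there exists r > 0 such that for every (x,y) ∈ Gr Γ ∩ (B(x̄,r) × B(ȳ,r)), every y* ∈ Y* and every x* ∈ D̂*Γ(x,y)(y*), one has ‖x*‖ ≥ α‖y*‖. -/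
open Filter Set Metric
open scoped ENNReal Topology

/-- The image of a set under a multifunction: `F(A) = ⋃_{x ∈ A} F x`. -/
def setImage {X Y : Type*} (F : X → Set Y) (A : Set X) : Set Y := ⋃ x ∈ A, F x

/-- `F` is open at linear rate `L > 0` around `(x₀, y₀)`. -/
def OpenAtRateAround {X Y : Type*} [MetricSpace X] [MetricSpace Y]
    (F : X → Set Y) (x₀ : X) (y₀ : Y) (L : ℝ) : Prop :=
  ∃ ε > (0 : ℝ), ∃ U ∈ 𝓝 x₀, ∃ V ∈ 𝓝 y₀,
    ∀ ρ : ℝ, 0 < ρ → ρ < ε → ∀ x ∈ U, ∀ y ∈ V, y ∈ F x →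
      ball y (ρ * L) ⊆ setImage F (ball x ρ)

/-- The exact linear openness (covering) bound `lop F(x₀,y₀)`. -/
noncomputable def lopMod {X Y : Type*} [MetricSpace X] [MetricSpace Y]
    (F : X → Set Y) (x₀ : X) (y₀ : Y) : ℝ≥0∞ :=
  sSup {l : ℝ≥0∞ | ∃ L : ℝ, 0 < L ∧ OpenAtRateAround F x₀ y₀ L ∧ l = ENNReal.ofReal L}

/-- If `Γ` is open at linear rate around `(xb, yb)`, then for every
`α ∈ (0, lop Γ(xb, yb))` there is `r > 0` such that every Fréchet coderivative element
`xstar ∈ D̂*Γ(x,y)(ystar)` at points of the graph `r`-close to `(xb, yb)` satisfies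
`‖xstar‖ ≥ α‖ystar‖`. -/
theorem openness_implies_coderivative_lower_estimate
    {X Y : Type*} [NormedAddCommGroup X] [NormedSpace ℝ X]
    [NormedAddCommGroup Y] [NormedSpace ℝ Y]
    (Γ : X → Set Y) (xb : X) (yb : Y) (hgr : yb ∈ Γ xb)
    (hop : ∃ L > (0 : ℝ), OpenAtRateAround Γ xb yb L)
    (α : ℝ) (hα₀ : 0 < α) (hα : ENNReal.ofReal α < lopMod Γ xb yb) :
    ∃ r > (0 : ℝ), ∀ x y, y ∈ Γ x → dist x xb < r → dist y yb < r →
      ∀ (ystar : Y →L[ℝ] ℝ) (xstar : X →L[ℝ] ℝ),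
        InFrechetCoderiv Γ x y ystar xstar → α * ‖ystar‖ ≤ ‖xstar‖ := by
  -- Extract a rate L with α < L from the supremum condition.
  obtain ⟨l, ⟨L, hL0, hopL, rfl⟩, hαl⟩ := (lt_sSup_iff).mp hα
  have hαL : α < L := by
    rwa [ENNReal.ofReal_lt_ofReal_iff hL0] at hαl
  obtain ⟨ε₀, hε₀, U, hU, V, hV, hopen⟩ := hopL
  obtain ⟨r₁, hr₁0, hr₁⟩ := Metric.mem_nhds_iff.mp hU
  obtain ⟨r₂, hr₂0, hr₂⟩ := Metric.mem_nhds_iff.mp hV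
  refine ⟨min r₁ r₂, lt_min hr₁0 hr₂0, ?_⟩
  intro x y hxy hdx hdy ystar xstar hcd
  have hxU : x ∈ U := hr₁ (mem_ball.mpr (lt_of_lt_of_le hdx (min_le_left _ _)))
  have hyV : y ∈ V := hr₂ (mem_ball.mpr (lt_of_lt_of_le hdy (min_le_right _ _)))
  by_cases hy0 : ystar = 0
  · simp only [hy0, norm_zero, mul_zero]
    exact norm_nonneg _
  have hys : 0 < ‖ystar‖ := norm_pos_iff.mpr hy0
  refine le_of_forall_pos_le_add ?_
  intro c hc
  set m : ℝ := (α + L) / 2 with hm_def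
  have hαm : α < m := by simp [hm_def]; linarith
  have hmL : m < L := by simp [hm_def]; linarith
  have hm0 : 0 < m := lt_trans hα₀ hαm
  set t : ℝ := (α / m) * ‖ystar‖ with ht_def
  have ht0 : 0 < t := mul_pos (div_pos hα₀ hm0) hys
  have htlt : t < ‖ystar‖ := by
    have : α / m < 1 := (div_lt_one hm0).mpr hαm
    calc t < 1 * ‖ystar‖ := by exact mul_lt_mul_of_pos_right this hys
    _ = ‖ystar‖ := one_mul _
  have hmt : m * t = α * ‖ystar‖ := by
    rw [ht_def]; field_simp
  -- find a direction v with ‖v‖ < 1 and t < ystar v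
  obtain ⟨v, hv1, hvt⟩ : ∃ v : Y, ‖v‖ < 1 ∧ t < ystar v := by
    obtain ⟨v, hv1, hvt⟩ := ContinuousLinearMap.exists_lt_apply_of_lt_opNorm ystar htlt
    rcases le_or_gt 0 (ystar v) with h | h
    · exact ⟨v, hv1, by rwa [Real.norm_eq_abs, abs_of_nonneg h] at hvt⟩
    · refine ⟨-v, by simpa using hv1, ?_⟩
      rw [map_neg]
      rwa [Real.norm_eq_abs, abs_of_neg h] at hvt
  set ε : ℝ := c / (1 + L) with hε_def
  have h1L : (0:ℝ) < 1 + L := by linarith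
  have hε : 0 < ε := div_pos hc h1L
  obtain ⟨δ, hδ0, hineq⟩ := hcd ε hε
  set ρ : ℝ := min ε₀ (δ / (1 + L)) / 2 with hρ_def
  have hρ0 : 0 < ρ := by
    have := div_pos hδ0 h1L
    positivity
  have hρε₀ : ρ < ε₀ := by
    have h2 : min ε₀ (δ / (1 + L)) ≤ ε₀ := min_le_left _ _
    have : ρ < min ε₀ (δ / (1 + L)) := by
      rw [hρ_def]
      have : 0 < min ε₀ (δ / (1 + L)) := lt_of_lt_of_le (by positivity) (le_refl _) |>.trans_le (le_refl _) |>.trans_eq rfl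
      linarith [lt_min hε₀ (div_pos hδ0 h1L)]
    linarith
  have hρδ : ρ * (1 + L) < δ := by
    have h2 : ρ < δ / (1 + L) := by
      have := lt_min hε₀ (div_pos hδ0 h1L)
      have h3 : min ε₀ (δ / (1 + L)) ≤ δ / (1 + L) := min_le_right _ _
      rw [hρ_def]; linarith
    calc ρ * (1 + L) < (δ / (1 + L)) * (1 + L) := by
          exact mul_lt_mul_of_pos_right h2 h1L
      _ = δ := by field_simp
  -- the test point w
  set w : Y := y - (ρ * m) • v with hw_def
  have hwy : w - y = -((ρ * m) • v) := by rw [hw_def]; abel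
  have hwynorm : ‖w - y‖ ≤ ρ * m := by
    rw [hwy, norm_neg, norm_smul, Real.norm_eq_abs, abs_of_pos (mul_pos hρ0 hm0)]
    nlinarith [norm_nonneg v, mul_pos hρ0 hm0]
  have hwball : w ∈ ball y (ρ * L) := by
    rw [mem_ball, dist_eq_norm]
    calc ‖w - y‖ ≤ ρ * m := hwynorm
      _ < ρ * L := mul_lt_mul_of_pos_left hmL hρ0
  have hwim := hopen ρ hρ0 hρε₀ x hxU y hyV hxy hwball
  obtain ⟨u, hu, hwu⟩ : ∃ u ∈ ball x ρ, w ∈ Γ u := by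
    simpa [setImage, mem_iUnion] using hwim
  have hux : ‖u - x‖ < ρ := by rw [← dist_eq_norm]; exact mem_ball.mp hu
  have hystar_wy : ystar (w - y) = -((ρ * m) * ystar v) := by
    rw [hwy, map_neg, map_smul, smul_eq_mul]
  have hwy_ne : w ≠ y := by
    intro h
    have : ystar (w - y) = 0 := by rw [h, sub_self, map_zero]
    rw [hystar_wy] at this
    nlinarith [mul_pos hρ0 hm0, lt_trans ht0 hvt]
  have hne : (u, w) ≠ (x, y) := by
    intro h
    exact hwy_ne (congrArg Prod.snd h)
  have hsum : ‖u - x‖ + ‖w - y‖ < δ := by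
    have h1 : ρ * m < ρ * L := mul_lt_mul_of_pos_left hmL hρ0
    have h2 : ρ * (1 + L) = ρ + ρ * L := by ring
    linarith
  have key := hineq u w hwu hne hsum
  -- estimate
  have hxstar : xstar (u - x) ≥ -(‖xstar‖ * ρ) := by
    have h1 : |xstar (u - x)| ≤ ‖xstar‖ * ‖u - x‖ := by
      simpa [Real.norm_eq_abs] using xstar.le_opNorm (u - x)
    have h2 : ‖xstar‖ * ‖u - x‖ ≤ ‖xstar‖ * ρ :=
      mul_le_mul_of_nonneg_left hux.le (norm_nonneg _)
    have := neg_abs_le (xstar (u - x))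
    linarith
  have hεbound : ε * (‖u - x‖ + ‖w - y‖) ≤ ρ * c := by
    have h0 : ρ * m ≤ ρ * L := le_of_lt (mul_lt_mul_of_pos_left hmL hρ0)
    have hr : ρ * (1 + L) = ρ + ρ * L := by ring
    have h1 : ‖u - x‖ + ‖w - y‖ ≤ ρ * (1 + L) := by linarith
    have hεL : ε * (1 + L) = c := div_mul_cancel₀ c h1L.ne'
    calc ε * (‖u - x‖ + ‖w - y‖) ≤ ε * (ρ * (1 + L)) :=
          mul_le_mul_of_nonneg_left h1 hε.le
      _ = ρ * (ε * (1 + L)) := by ring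
      _ = ρ * c := by rw [hεL]
  have hlhs : ρ * (α * ‖ystar‖) < ρ * m * ystar v := by
    rw [← hmt]
    calc ρ * (m * t) = ρ * m * t := by ring
      _ < ρ * m * ystar v := mul_lt_mul_of_pos_left hvt (mul_pos hρ0 hm0)
  have hchain : ρ * m * ystar v ≤ ρ * c + ‖xstar‖ * ρ := by
    have : xstar (u - x) - ystar (w - y) ≤ ρ * c := le_trans key hεbound
    rw [hystar_wy] at this
    linarith
  have heq : ρ * (‖xstar‖ + c) = ρ * c + ‖xstar‖ * ρ := by ring
  have hfinal : ρ * (α * ‖ystar‖) ≤ ρ * (‖xstar‖ + c) := by linarith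
  exact le_of_mul_le_mul_left hfinal hρ0
end

section
/- Let X, Y, Z be Banach spaces, Φ : X × Y ⇒ Z a multifunction and ((x̄,ȳ),z̄) ∈ Gr Φ. If Φ has the Aubin property with respect to x uniformly in y around ((x̄,ȳ),z̄), then for every α > lip̂ₓΦ((x̄,ȳ),z̄) there exists r > 0 such that for every y ∈ B(ȳ,r), every (x,z) ∈ Gr Φ_y ∩ (B(x̄,r) × B(z̄,r)), every z* ∈ Z* and every x* ∈ D̂*Φ_y(x,z)(z*), one has ‖x*‖ ≤ α‖z*‖. -/
open Filter Set Metric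
open scoped ENNReal Topology

/-- `Φ` has the Aubin property with respect to `x` uniformly in `y` around
`((x₀,y₀), z₀)` with constant `L > 0`. -/
def AubinPartialX {X Y Z : Type*} [MetricSpace X] [MetricSpace Y] [MetricSpace Z]
    (Φ : X → Y → Set Z) (x₀ : X) (y₀ : Y) (z₀ : Z) (L : ℝ) : Prop :=
  ∃ U ∈ 𝓝 x₀, ∃ V ∈ 𝓝 y₀, ∃ W ∈ 𝓝 z₀,
    ∀ y ∈ V, ∀ x ∈ U, ∀ u ∈ U,
      excess (Φ x y ∩ W) (Φ u y) ≤ ENNReal.ofReal (L * dist x u)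

/-- The exact partial Lipschitz bound `lip̂ₓ Φ((x₀,y₀),z₀)`. -/
noncomputable def lipHatXMod {X Y Z : Type*} [MetricSpace X] [MetricSpace Y] [MetricSpace Z]
    (Φ : X → Y → Set Z) (x₀ : X) (y₀ : Y) (z₀ : Z) : ℝ≥0∞ :=
  sInf {l : ℝ≥0∞ | ∃ L : ℝ, 0 < L ∧ AubinPartialX Φ x₀ y₀ z₀ L ∧ l = ENNReal.ofReal L}

set_option maxHeartbeats 2000000 in
/-- If `Φ` has the Aubin property with respect to `x` uniformly in `y`
around `((xb,yb),zb)`, then for every `α > lip̂ₓΦ((xb,yb),zb)` there is `r > 0` such that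
every Fréchet coderivative element `xstar ∈ D̂*Φ_y(x,z)(zstar)` with `y ∈ B(yb,r)` and
`(x,z) ∈ Gr Φ_y` `r`-close to `(xb,zb)` satisfies `‖xstar‖ ≤ α‖zstar‖`. -/
theorem partial_aubin_implies_coderivative_upper_estimate
    {X Y Z : Type*} [NormedAddCommGroup X] [NormedSpace ℝ X]
    [NormedAddCommGroup Y] [NormedSpace ℝ Y] [NormedAddCommGroup Z] [NormedSpace ℝ Z]
    (Φ : X → Y → Set Z) (xb : X) (yb : Y) (zb : Z) (hgr : zb ∈ Φ xb yb)
    (haub : ∃ L > (0 : ℝ), AubinPartialX Φ xb yb zb L)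
    (α : ℝ) (hα : lipHatXMod Φ xb yb zb < ENNReal.ofReal α) :
    ∃ r > (0 : ℝ), ∀ y, dist y yb < r → ∀ x z, z ∈ Φ x y →
      dist x xb < r → dist z zb < r →
      ∀ (zstar : Z →L[ℝ] ℝ) (xstar : X →L[ℝ] ℝ),
        InFrechetCoderiv (fun x' => Φ x' y) x z zstar xstar → ‖xstar‖ ≤ α * ‖zstar‖ := by
  classical
  obtain ⟨l, hlmem, hlα⟩ := sInf_lt_iff.mp hα
  obtain ⟨L, hL0, hAub, rfl⟩ := hlmem
  have hLα : L < α := (ENNReal.ofReal_lt_ofReal_iff_of_nonneg hL0.le).mp hlα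
  have hα0 : 0 < α := hL0.trans hLα
  obtain ⟨U, hU, V, hV, W, hW, hE⟩ := hAub
  obtain ⟨rU, hrU, hUb⟩ := Metric.mem_nhds_iff.mp hU
  obtain ⟨rV, hrV, hVb⟩ := Metric.mem_nhds_iff.mp hV
  obtain ⟨rW, hrW, hWb⟩ := Metric.mem_nhds_iff.mp hW
  set r := min (rU / 2) (min rV rW) with hr_def
  have hr : 0 < r := lt_min (by linarith) (lt_min hrV hrW)
  refine ⟨r, hr, ?_⟩
  intro y hy x z hz hx hzd zstar xstar hcod
  have hyV : y ∈ V := hVb (mem_ball.mpr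
    (hy.trans_le ((min_le_right _ _).trans (min_le_left _ _))))
  have hzW : z ∈ W := hWb (mem_ball.mpr
    (hzd.trans_le ((min_le_right _ _).trans (min_le_right _ _))))
  have hrU2 : r ≤ rU / 2 := min_le_left _ _
  have hxU : x ∈ U := hUb (mem_ball.mpr (by linarith))
  have key : ∀ h : X, xstar h ≤ L * ‖zstar‖ * ‖h‖ := by
    intro h
    rcases eq_or_ne h 0 with rfl | hh
    · simp
    have hnorm : 0 < ‖h‖ := norm_pos_iff.mpr hh
    have step : ∀ ε : ℝ, 0 < ε → ε < 1 →
        xstar h ≤ L * ‖zstar‖ * ‖h‖ + ε * ((‖zstar‖ + 2 + L) * ‖h‖) := by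
      intro ε hε hε1
      obtain ⟨δ, hδ, hδspec⟩ := hcod ε hε
      have hden : (0:ℝ) < 1 + L + ε := by linarith
      set m := min r (δ / (1 + L + ε)) with hm_def
      have hm : 0 < m := lt_min hr (by positivity)
      set t := m / (2 * ‖h‖) with ht_def
      have ht : 0 < t := by positivity
      have hth : t * ‖h‖ = m / 2 := by
        rw [ht_def]; field_simp
      have hth1 : t * ‖h‖ < r := by
        rw [hth]; calc m / 2 ≤ r / 2 := by linarith [min_le_left r (δ / (1 + L + ε))]
          _ < r := by linarith
      have hth2 : (1 + L + ε) * (t * ‖h‖) < δ := by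
        rw [hth]
        have h1 : m ≤ δ / (1 + L + ε) := min_le_right _ _
        have h2 : (1 + L + ε) * m ≤ δ := by
          rw [← le_div_iff₀' hden]; exact h1
        nlinarith
      set u := x + t • h with hu_def
      have hux : u - x = t • h := by rw [hu_def]; abel
      have huxn : ‖u - x‖ = t * ‖h‖ := by
        rw [hux, norm_smul, Real.norm_eq_abs, abs_of_pos ht]
      have hdxu : dist x u = t * ‖h‖ := by
        rw [dist_eq_norm, ← norm_neg, neg_sub, huxn]
      have huU : u ∈ U := by
        apply hUb
        rw [mem_ball]
        calc dist u xb ≤ dist u x + dist x xb := dist_triangle _ _ _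
          _ < t * ‖h‖ + r := by
            rw [dist_eq_norm, huxn]; linarith
          _ < r + r := by linarith
          _ ≤ rU := by linarith
      have hEx := hE y hyV x hxU u huU
      unfold excess at hEx
      have hinf : EMetric.infEdist z (Φ u y) ≤ ENNReal.ofReal (L * dist x u) :=
        le_trans (le_iSup₂ (f := fun a (_ : a ∈ Φ x y ∩ W) =>
          EMetric.infEdist a (Φ u y)) z ⟨hz, hzW⟩) hEx
      have hpos : (0:ℝ) < L * (t * ‖h‖) + ε * (t * ‖h‖) := by positivity
      have hlt : EMetric.infEdist z (Φ u y) <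
          ENNReal.ofReal (L * (t * ‖h‖) + ε * (t * ‖h‖)) := by
        refine lt_of_le_of_lt hinf ?_
        rw [hdxu]
        exact (ENNReal.ofReal_lt_ofReal_iff hpos).mpr (by nlinarith)
      obtain ⟨w, hw, hwz⟩ := EMetric.infEdist_lt_iff.mp hlt
      have hdzw : dist z w < L * (t * ‖h‖) + ε * (t * ‖h‖) := edist_lt_ofReal.mp hwz
      have hwzn : ‖w - z‖ < L * (t * ‖h‖) + ε * (t * ‖h‖) := by
        rw [← dist_eq_norm, dist_comm]; exact hdzw
      have hne : (u, w) ≠ (x, z) := by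
        intro hcon
        have h1 : u = x := (Prod.mk.injEq _ _ _ _ ▸ hcon : u = x ∧ w = z).1
        have : t • h = 0 := by rw [← hux, h1, sub_self]
        exact hh (by simpa [smul_eq_zero, ne_of_gt ht] using this)
      have hwz0 : 0 ≤ ‖w - z‖ := norm_nonneg _
      have hsmall : ‖u - x‖ + ‖w - z‖ < δ := by
        rw [huxn]; nlinarith
      have hmain := hδspec u w hw hne hsmall
      have hux2 : xstar (u - x) = t * xstar h := by
        rw [hux, map_smul]; rfl
      have hzb : zstar (w - z) ≤ ‖zstar‖ * ‖w - z‖ :=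
        le_trans (le_abs_self _) (by rw [← Real.norm_eq_abs]; exact zstar.le_opNorm _)
      rw [hux2, huxn] at hmain
      have hzs : 0 ≤ ‖zstar‖ := norm_nonneg _
      have hfinal : t * xstar h ≤ t * (L * ‖zstar‖ * ‖h‖ + ε * ((‖zstar‖ + 2 + L) * ‖h‖)) := by
        nlinarith [mul_le_mul_of_nonneg_left hwzn.le hzs,
          mul_le_mul_of_nonneg_left hwzn.le hε.le,
          mul_nonneg (mul_nonneg (sub_nonneg.mpr hε1.le) hε.le)
            (mul_nonneg ht.le hnorm.le)]
      exact le_of_mul_le_mul_left (by linarith [hfinal]) ht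
    have hC : (0:ℝ) < (‖zstar‖ + 2 + L) * ‖h‖ := by positivity
    have : ∀ ε₀ : ℝ, 0 < ε₀ → xstar h ≤ L * ‖zstar‖ * ‖h‖ + ε₀ := by
      intro ε₀ hε₀
      set C := (‖zstar‖ + 2 + L) * ‖h‖
      set ε := min (ε₀ / C) 1 / 2 with hε_def
      have hε : 0 < ε := by positivity
      have hε1 : ε < 1 := by
        have : min (ε₀ / C) 1 ≤ 1 := min_le_right _ _
        rw [hε_def]; linarith
      have hεC : ε * C ≤ ε₀ := by
        have h1 : min (ε₀ / C) 1 ≤ ε₀ / C := min_le_left _ _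
        have h2 : ε ≤ ε₀ / C := by rw [hε_def]; linarith
        calc ε * C ≤ (ε₀ / C) * C := by nlinarith
          _ = ε₀ := by field_simp
      have := step ε hε hε1
      linarith
    by_contra hcon
    push_neg at hcon
    have := this ((xstar h - L * ‖zstar‖ * ‖h‖) / 2) (by linarith)
    linarith
  refine xstar.opNorm_le_bound (by positivity) ?_
  intro h
  have h1 := key h
  have h2 := key (-h)
  rw [map_neg, norm_neg] at h2
  have hzs : 0 ≤ ‖zstar‖ * ‖h‖ := by positivity
  have hmul : L * (‖zstar‖ * ‖h‖) ≤ α * (‖zstar‖ * ‖h‖) :=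
    mul_le_mul_of_nonneg_right hLα.le hzs
  rw [Real.norm_eq_abs, abs_le]
  constructor <;> nlinarith
end

section
/- Let X, Y, Z be Banach spaces, Φ : X × Y ⇒ Z a multifunction and ((x̄,ȳ),z̄) ∈ Gr Φ. If Φ is open at linear rate with respect to x uniformly in y around ((x̄,ȳ),z̄), then for every α ∈ (0, lop̂ₓΦ((x̄,ȳ),z̄)) there exists r > 0 such that for every y ∈ B(ȳ,r), every (x,z) ∈ Gr Φ_y ∩ (B(x̄,r) × B(z̄,r)), every z* ∈ Z* and every x* ∈ D̂*Φ_y(x,z)(z*), one has ‖x*‖ ≥ α‖z*‖. -/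
open Filter Set Metric
open scoped ENNReal Topology

/-- `Φ` is open at linear rate `L > 0` with respect to `x` uniformly in `y` around
`((x₀,y₀), z₀)`. -/
def OpenPartialX {X Y Z : Type*} [MetricSpace X] [MetricSpace Y] [MetricSpace Z]
    (Φ : X → Y → Set Z) (x₀ : X) (y₀ : Y) (z₀ : Z) (L : ℝ) : Prop :=
  ∃ ε > (0 : ℝ), ∃ U ∈ 𝓝 x₀, ∃ V ∈ 𝓝 y₀, ∃ W ∈ 𝓝 z₀,
    ∀ ρ : ℝ, 0 < ρ → ρ < ε → ∀ y ∈ V, ∀ x ∈ U, ∀ z ∈ W, z ∈ Φ x y →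
      ball z (ρ * L) ⊆ setImage (fun x' => Φ x' y) (ball x ρ)

/-- The exact partial covering bound `lop̂ₓ Φ((x₀,y₀),z₀)`. -/
noncomputable def lopHatXMod {X Y Z : Type*} [MetricSpace X] [MetricSpace Y] [MetricSpace Z]
    (Φ : X → Y → Set Z) (x₀ : X) (y₀ : Y) (z₀ : Z) : ℝ≥0∞ :=
  sSup {l : ℝ≥0∞ | ∃ L : ℝ, 0 < L ∧ OpenPartialX Φ x₀ y₀ z₀ L ∧ l = ENNReal.ofReal L}

lemma aux_sigma (m cL : ℝ) (hm : 0 < m) (hcL : 0 < cL) (hmcL : m < cL) :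
    0 < (m + cL) / (2 * cL) ∧ (m + cL) / (2 * cL) < 1 ∧
      m < ((m + cL) / (2 * cL)) * cL := by
  refine ⟨by positivity, ?_, ?_⟩
  · rw [div_lt_one (by positivity)]; linarith
  · rw [div_mul_eq_mul_div, lt_div_iff₀ (by positivity)]; nlinarith

lemma aux_rho (ε δ L : ℝ) (hε : 0 < ε) (hδ : 0 < δ) (hL : 0 < L) :
    ∃ ρ : ℝ, 0 < ρ ∧ ρ < ε ∧ ρ * (1 + L) < δ := by
  refine ⟨min (ε / 2) (δ / (2 * (1 + L))), ?_, ?_, ?_⟩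
  · have h1 : (0:ℝ) < 1 + L := by linarith
    positivity
  · exact lt_of_le_of_lt (min_le_left _ _) (by linarith)
  · have h1 : (0:ℝ) < 1 + L := by linarith
    have h2 : min (ε / 2) (δ / (2 * (1 + L))) ≤ δ / (2 * (1 + L)) := min_le_right _ _
    calc min (ε / 2) (δ / (2 * (1 + L))) * (1 + L)
        ≤ (δ / (2 * (1 + L))) * (1 + L) := mul_le_mul_of_nonneg_right h2 h1.le
      _ = δ / 2 := by field_simp
      _ < δ := by linarith

lemma aux_final (ρ σ L c xs a a2 b η : ℝ) (hρ : 0 < ρ) (hη : 0 < η) (hL : 0 < L)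
    (hineq : a - (-(ρ * σ * L * c)) ≤ η / (1 + L) * (a2 + b))
    (ha : -(xs * ρ) ≤ a) (ha2 : 0 ≤ a2) (hb : 0 ≤ b)
    (hsum : a2 + b < ρ * (1 + L)) :
    σ * (c * L) ≤ xs + η := by
  have h1L : (0:ℝ) < 1 + L := by linarith
  have hr : η / (1 + L) * (a2 + b) ≤ η * ρ := by
    have h2 : η / (1 + L) * (a2 + b) ≤ η / (1 + L) * (ρ * (1 + L)) :=
      mul_le_mul_of_nonneg_left hsum.le (by positivity)
    calc η / (1 + L) * (a2 + b) ≤ η / (1 + L) * (ρ * (1 + L)) := h2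
      _ = η * ρ := by field_simp
  have key : ρ * (σ * (c * L)) ≤ ρ * (xs + η) := by nlinarith [hineq, ha, hr]
  exact le_of_mul_le_mul_left key hρ

/-- If `Φ` is open at linear rate with respect to `x` uniformly in `y`
around `((xb,yb),zb)`, then for every `α ∈ (0, lop̂ₓΦ((xb,yb),zb))` there is `r > 0` such
that every Fréchet coderivative element `xstar ∈ D̂*Φ_y(x,z)(zstar)` with `y ∈ B(yb,r)`
and `(x,z) ∈ Gr Φ_y` `r`-close to `(xb,zb)` satisfies `‖xstar‖ ≥ α‖zstar‖`. -/
theorem partial_openness_implies_coderivative_lower_estimate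
    {X Y Z : Type*} [NormedAddCommGroup X] [NormedSpace ℝ X]
    [NormedAddCommGroup Y] [NormedSpace ℝ Y] [NormedAddCommGroup Z] [NormedSpace ℝ Z]
    (Φ : X → Y → Set Z) (xb : X) (yb : Y) (zb : Z) (hgr : zb ∈ Φ xb yb)
    (hop : ∃ L > (0 : ℝ), OpenPartialX Φ xb yb zb L)
    (α : ℝ) (hα₀ : 0 < α) (hα : ENNReal.ofReal α < lopHatXMod Φ xb yb zb) :
    ∃ r > (0 : ℝ), ∀ y, dist y yb < r → ∀ x z, z ∈ Φ x y →
      dist x xb < r → dist z zb < r →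
      ∀ (zstar : Z →L[ℝ] ℝ) (xstar : X →L[ℝ] ℝ),
        InFrechetCoderiv (fun x' => Φ x' y) x z zstar xstar → α * ‖zstar‖ ≤ ‖xstar‖ := by
  -- Extract a rate `L > α` from the supremum.
  obtain ⟨l, hlmem, hαl⟩ := lt_sSup_iff.mp hα
  obtain ⟨L, hL0, hopen, rfl⟩ := hlmem
  have hαL : α < L := by
    rwa [ENNReal.ofReal_lt_ofReal_iff hL0] at hαl
  obtain ⟨ε, hε, U, hU, V, hV, W, hW, hkey⟩ := hopen
  obtain ⟨rU, hrU, hUb⟩ := Metric.mem_nhds_iff.mp hU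
  obtain ⟨rV, hrV, hVb⟩ := Metric.mem_nhds_iff.mp hV
  obtain ⟨rW, hrW, hWb⟩ := Metric.mem_nhds_iff.mp hW
  refine ⟨min rU (min rV rW), by positivity, ?_⟩
  intro y hy x z hz hx hzw zstar xstar hcod
  have hxU : x ∈ U := hUb (mem_ball.mpr (lt_of_lt_of_le hx (min_le_left _ _)))
  have hyV : y ∈ V := hVb (mem_ball.mpr (lt_of_lt_of_le hy
    ((min_le_right _ _).trans (min_le_left _ _))))
  have hzW : z ∈ W := hWb (mem_ball.mpr (lt_of_lt_of_le hzw
    ((min_le_right _ _).trans (min_le_right _ _))))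
  rcases eq_or_ne zstar 0 with rfl | hzs
  · simp
  have hzsn : 0 < ‖zstar‖ := norm_pos_iff.mpr hzs
  have hm : (0:ℝ) < α * ‖zstar‖ := by positivity
  have hmL : α * ‖zstar‖ / L < ‖zstar‖ := by
    rw [div_lt_iff₀ hL0]
    nlinarith
  obtain ⟨v₀, hv₀, hv₀L⟩ := zstar.exists_lt_apply_of_lt_opNorm hmL
  obtain ⟨v, hv1, hvc⟩ : ∃ v : Z, ‖v‖ < 1 ∧ α * ‖zstar‖ / L < zstar v := by
    rcases le_or_gt 0 (zstar v₀) with h | h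
    · exact ⟨v₀, hv₀, by rwa [Real.norm_eq_abs, abs_of_nonneg h] at hv₀L⟩
    · refine ⟨-v₀, by simpa using hv₀, ?_⟩
      rw [map_neg]
      rwa [Real.norm_eq_abs, abs_of_neg h] at hv₀L
  have hc0 : 0 < zstar v := lt_trans (by positivity) hvc
  have hmcL : α * ‖zstar‖ < zstar v * L := by rwa [div_lt_iff₀ hL0] at hvc
  have hv0 : v ≠ 0 := fun h => by simp [h] at hc0
  obtain ⟨hσ0, hσ1, hσcL⟩ := aux_sigma (α * ‖zstar‖) (zstar v * L) hm
    (by positivity) hmcL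
  set σ : ℝ := (α * ‖zstar‖ + zstar v * L) / (2 * (zstar v * L)) with hσdef
  -- Main estimate: `σ * (zstar v * L) ≤ ‖xstar‖ + η` for every `η > 0`.
  have hmain : σ * (zstar v * L) ≤ ‖xstar‖ := by
    refine le_of_forall_pos_le_add fun η hη => ?_
    obtain ⟨δ, hδ0, hδ⟩ := hcod (η / (1 + L)) (by positivity)
    obtain ⟨ρ, hρ0, hρε, hρδ⟩ := aux_rho ε δ L hε hδ0 hL0
    have hρσL : ρ * σ * L < ρ * L := by
      nlinarith only [mul_pos (mul_pos hρ0 hL0) (sub_pos.mpr hσ1), hρ0, hL0, hσ1]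
    have hwz : ‖z - (ρ * σ * L) • v - z‖ ≤ ρ * σ * L := by
      have he : z - (ρ * σ * L) • v - z = -((ρ * σ * L) • v) := by abel
      rw [he, norm_neg, norm_smul, Real.norm_eq_abs, abs_of_nonneg (by positivity)]
      nlinarith only [hv1, hρ0, hσ0, hL0, norm_nonneg v,
        mul_pos (mul_pos hρ0 hσ0) hL0]
    have hwball : z - (ρ * σ * L) • v ∈ ball z (ρ * L) := by
      rw [mem_ball, dist_eq_norm]
      exact lt_of_le_of_lt hwz hρσL
    obtain ⟨u, hu, hwu⟩ : ∃ u ∈ ball x ρ, z - (ρ * σ * L) • v ∈ Φ u y := by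
      have := hkey ρ hρ0 hρε y hyV x hxU z hzW hz hwball
      simpa [setImage, mem_iUnion₂] using this
    have hune : (u, z - (ρ * σ * L) • v) ≠ (x, z) := by
      intro h
      have hwzeq : z - (ρ * σ * L) • v = z := (Prod.mk.injEq _ _ _ _ ▸ h).2
      rw [sub_eq_self] at hwzeq
      rcases smul_eq_zero.mp hwzeq with h' | h'
      · have : (0:ℝ) < ρ * σ * L := by positivity
        exact absurd h' this.ne'
      · exact hv0 h'
    have hux : ‖u - x‖ < ρ := by rw [← dist_eq_norm]; exact mem_ball.mp hu
    have hsum : ‖u - x‖ + ‖z - (ρ * σ * L) • v - z‖ < ρ * (1 + L) := by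
      have hx1 : ρ * (1 + L) = ρ + ρ * L := by ring
      have h2 := lt_of_le_of_lt hwz hρσL
      linarith only [hux, h2, hx1]
    have hineq := hδ u _ hwu hune (lt_trans hsum hρδ)
    have hzw' : zstar (z - (ρ * σ * L) • v - z) = -(ρ * σ * L * zstar v) := by
      have he : z - (ρ * σ * L) • v - z = -((ρ * σ * L) • v) := by abel
      rw [he, map_neg, map_smul, smul_eq_mul]
    rw [hzw'] at hineq
    have hxb : -(‖xstar‖ * ρ) ≤ xstar (u - x) := by
      have h1 : |xstar (u - x)| ≤ ‖xstar‖ * ‖u - x‖ := by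
        rw [← Real.norm_eq_abs]; exact xstar.le_opNorm _
      have h2 : ‖xstar‖ * ‖u - x‖ ≤ ‖xstar‖ * ρ :=
        mul_le_mul_of_nonneg_left hux.le (norm_nonneg _)
      have h3 := neg_abs_le (xstar (u - x))
      linarith only [h1, h2, h3]
    exact aux_final ρ σ L (zstar v) ‖xstar‖ (xstar (u - x)) _ _ η hρ0 hη hL0
      hineq hxb (norm_nonneg _) (norm_nonneg _) hsum
  linarith only [hσcL, hmain]
end
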